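/- Boundary regularity at the right endpoint under an integral decay condition, strong form of Theorem 3.2(jj). Let f : (a,b) × ℝ → ℝ and let u ∈ W^{1,1}(a,b) be continuously differentiable on (a,b) with u' locally absolutely continuous on (a,b), satisfying −(u'(x)/√(1+u'(x)²))' = f(x, u(x)) for almost every x ∈ (a,b), with f(x, u(x)) ≥ 0 for almost every x ∈ (a,b). Assume there exist δ > 0 and μ ∈ L¹(b−δ, b) such that f(x, u(x)) ≤ μ(x) for almost every x ∈ (b−δ, b), M(x) := ∫ₓ^b μ(t) dt > 0 for all x ∈ [b−δ, b), and ∫_{b−δ}^b dx/√(M(x)) = +∞. Then the limit u'(b⁻) = lim_{x→b⁻} u'(x) is finite, and consequently u'' is integrable on (c, b) for every c ∈ (a,b). -/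

import Mathlib

/-!
Since `-u'' ≥ 0`, `u'` decreases. With `ψ(s) = s / √(1 + s²)`, the chain rule for absolutely
continuous functions turns the equation into `(ψ ∘ u')' = -f(·, u)`, so
`ψ(u'(x)) - ψ(u'(y)) ≤ ∫ₓʸ μ < M(x)` for `b - δ < x ≤ y < b`. If `u'(b⁻) = -∞`, then
`ψ(u'(y)) → -1`, hence `1 + ψ(u'(x)) ≤ M(x)`; since `1 + ψ(s) ≥ (2(1 + |s|))⁻²`, this gives
`M(x)^{-1/2} ≤ 2(1 + |u'(x)|)`, which is integrable because `u' ∈ L¹`, contradicting the decay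
condition. Once `u'(b⁻)` is finite, `∫_c^d |u''| = u'(c) - u'(d)` stays bounded as `d → b`.
-/

open Set Filter MeasureTheory Topology

/-- The map `ψ` of the curvature operator: the equation reads `-(ψ ∘ u')' = f(x, u)`. -/
noncomputable def curvatureFlux (s : ℝ) : ℝ := s / √(1 + s ^ 2)

lemma rpow_three_halves_eq_mul_sqrt {x : ℝ} (hx : 0 < x) : x ^ ((3 : ℝ) / 2) = x * √x := by
  rw [show (3 : ℝ) / 2 = 1 + 1 / 2 by norm_num, Real.rpow_add hx, Real.rpow_one,
    Real.sqrt_eq_rpow]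

lemma hasDerivAt_curvatureFlux (s : ℝ) :
    HasDerivAt curvatureFlux ((1 + s ^ 2) ^ ((3 : ℝ) / 2))⁻¹ s := by
  have hpos : 0 < 1 + s ^ 2 := by positivity
  have hsqrt : HasDerivAt (fun t : ℝ => √(1 + t ^ 2)) (s / √(1 + s ^ 2)) s := by
    convert ((hasDerivAt_pow 2 s).const_add 1).sqrt hpos.ne' using 1
    field_simp
    ring
  refine ((hasDerivAt_id' s).div hsqrt (Real.sqrt_pos.2 hpos).ne').congr_deriv ?_
  rw [rpow_three_halves_eq_mul_sqrt hpos]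
  field_simp
  rw [Real.sq_sqrt hpos.le]
  ring

lemma lipschitzWith_curvatureFlux : LipschitzWith 1 curvatureFlux := by
  refine lipschitzWith_of_nnnorm_deriv_le (fun s => (hasDerivAt_curvatureFlux s).differentiableAt)
    fun s => ?_
  rw [(hasDerivAt_curvatureFlux s).deriv, ← NNReal.coe_le_coe, coe_nnnorm, Real.norm_eq_abs,
    NNReal.coe_one, abs_of_pos (by positivity)]
  exact inv_le_one_of_one_le₀ (Real.one_le_rpow (by nlinarith) (by norm_num))

lemma abs_lt_sqrt_one_add_sq (s : ℝ) : |s| < √(1 + s ^ 2) := by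
  rw [← Real.sqrt_sq_eq_abs]
  exact Real.sqrt_lt_sqrt (sq_nonneg s) (by linarith)

lemma sqrt_one_add_sq_mul_sub_pos (s : ℝ) : 0 < √(1 + s ^ 2) * (√(1 + s ^ 2) - s) := by
  have := abs_lt_sqrt_one_add_sq s
  have := le_abs_self s
  have := abs_nonneg s
  apply mul_pos <;> linarith

lemma one_add_curvatureFlux_eq (s : ℝ) :
    1 + curvatureFlux s = (√(1 + s ^ 2) * (√(1 + s ^ 2) - s))⁻¹ := by
  have hpos := sqrt_one_add_sq_mul_sub_pos s
  have hq : 0 < √(1 + s ^ 2) := Real.sqrt_pos.2 (by positivity)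
  have hsq : √(1 + s ^ 2) ^ 2 = 1 + s ^ 2 := Real.sq_sqrt (by positivity)
  refine eq_inv_of_mul_eq_one_left ?_
  rw [curvatureFlux]
  field_simp
  nlinarith

lemma neg_one_lt_curvatureFlux (s : ℝ) : -1 < curvatureFlux s := by
  have := one_add_curvatureFlux_eq s ▸ inv_pos.2 (sqrt_one_add_sq_mul_sub_pos s)
  linarith

lemma one_add_curvatureFlux_le_of_nonpos {s : ℝ} (hs : s ≤ 0) :
    1 + curvatureFlux s ≤ (1 + s ^ 2)⁻¹ := by
  have hq : 0 < √(1 + s ^ 2) := Real.sqrt_pos.2 (by positivity)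
  have hsq : √(1 + s ^ 2) * √(1 + s ^ 2) = 1 + s ^ 2 := Real.mul_self_sqrt (by positivity)
  rw [one_add_curvatureFlux_eq]
  exact inv_anti₀ (by positivity) (by nlinarith)

lemma tendsto_curvatureFlux_atBot : Tendsto curvatureFlux atBot (𝓝 (-1)) := by
  have hinv : Tendsto (fun s : ℝ => (1 + s ^ 2)⁻¹) atBot (𝓝 0) :=
    tendsto_inv_atTop_zero.comp <| tendsto_atTop_mono (fun s => by nlinarith)
      tendsto_neg_atBot_atTop
  refine tendsto_of_tendsto_of_tendsto_of_le_of_le' tendsto_const_nhds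
    (by simpa using hinv.const_add (-1))
    (Eventually.of_forall fun s => (neg_one_lt_curvatureFlux s).le) ?_
  filter_upwards [eventually_le_atBot 0] with s hs
  linarith [one_add_curvatureFlux_le_of_nonpos hs]

lemma inv_two_mul_one_add_abs_sq_le (s : ℝ) :
    (2 * (1 + |s|))⁻¹ ^ 2 ≤ 1 + curvatureFlux s := by
  have hq := abs_lt_sqrt_one_add_sq s
  have hq' : √(1 + s ^ 2) ≤ 1 + |s| := by
    rw [Real.sqrt_le_left (by positivity), ← sq_abs s]
    nlinarith [abs_nonneg s]
  rw [one_add_curvatureFlux_eq, inv_pow]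
  gcongr
  · exact sqrt_one_add_sq_mul_sub_pos s
  · nlinarith [neg_abs_le s, abs_nonneg s]

theorem LipschitzWith.comp_absolutelyContinuousOnInterval {X Y : Type*} [PseudoMetricSpace X]
    [PseudoMetricSpace Y] {g : X → Y} {K : NNReal} (hg : LipschitzWith K g) {f : ℝ → X}
    {a b : ℝ} (hf : AbsolutelyContinuousOnInterval f a b) :
    AbsolutelyContinuousOnInterval (g ∘ f) a b := by
  unfold AbsolutelyContinuousOnInterval at hf ⊢
  refine squeeze_zero' (Eventually.of_forall fun E => Finset.sum_nonneg fun i _ => dist_nonneg)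
    (Eventually.of_forall fun E => ?_) (by simpa using hf.const_mul (K : ℝ))
  rw [Finset.mul_sum]
  exact Finset.sum_le_sum fun i _ => hg.dist_le_mul _ _

theorem integral_deriv_comp_mul_eq_sub_of_eq_add_integral {g g' v w : ℝ → ℝ} {K : NNReal}
    {c d : ℝ} (hg : LipschitzWith K g) (hg' : ∀ y, HasDerivAt g (g' y) y) (hcd : c ≤ d)
    (hw : IntervalIntegrable w volume c d) (hv : ∀ x ∈ Icc c d, v x = v c + ∫ t in c..x, w t) :
    ∫ t in c..d, g' (v t) * w t = g (v d) - g (v c) := by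
  set V : ℝ → ℝ := fun x => v c + ∫ t in c..x, w t
  have hV : AbsolutelyContinuousOnInterval V c d :=
    (LipschitzWith.const (v c)).lipschitzOnWith.absolutelyContinuousOnInterval.add
      (hw.absolutelyContinuousOnInterval_intervalIntegral left_mem_uIcc)
  have hVd : V d = v d := (hv d (right_mem_Icc.2 hcd)).symm
  have hVc : V c = v c := by simp [V]
  rw [← hVd, ← hVc]
  refine Eq.trans ?_ (hg.comp_absolutelyContinuousOnInterval hV).integral_deriv_eq_sub
  refine intervalIntegral.integral_congr_ae ?_
  filter_upwards [hw.ae_hasDerivAt_integral] with t ht htcd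
  have htcd' : t ∈ Icc c d := by
    rw [uIoc_of_le hcd] at htcd; exact Ioc_subset_Icc_self htcd
  have hderiv :=
    (hg' (V t)).comp t ((ht (uIcc_of_le hcd ▸ htcd') c left_mem_uIcc).const_add (v c))
  rw [hderiv.deriv, hv t htcd']

lemma AntitoneOn.tendsto_atBot_of_not_bddBelow {α β : Type*} [LinearOrder α] [TopologicalSpace α]
    [OrderTopology α] [LinearOrder β] {f : α → β} {a b : α} (hf : AntitoneOn f (Ioo a b))
    (h : ¬ BddBelow (f '' Ioo a b)) : Tendsto f (𝓝[<] b) atBot := by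
  refine tendsto_atBot.2 fun K => ?_
  obtain ⟨_, ⟨y, hy, rfl⟩, hyK⟩ := not_bddBelow_iff.1 h K
  filter_upwards [Ioo_mem_nhdsLT hy.2] with t ht
  exact (hf hy ⟨hy.1.trans ht.1, ht.2⟩ ht.1.le).trans hyK.le

/-- `v` is locally absolutely continuous on `(a, b)` with a.e. derivative `w`, encoded by the
fundamental theorem of calculus on compact subintervals. -/
def LocAbsContWithDeriv (v w : ℝ → ℝ) (a b : ℝ) : Prop :=
  ∀ c d : ℝ, a < c → c ≤ d → d < b →
    IntegrableOn w (Icc c d) ∧ ∀ x ∈ Icc c d, v x = v c + ∫ t in c..x, w t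

lemma LocAbsContWithDeriv.antitoneOn {v w : ℝ → ℝ} {a b : ℝ} (hv : LocAbsContWithDeriv v w a b)
    (hw : ∀ᵐ t, t ∈ Ioo a b → w t ≤ 0) : AntitoneOn v (Ioo a b) := by
  intro s hs t ht hst
  rw [(hv s t hs.1 hst ht.2).2 t (right_mem_Icc.2 hst), intervalIntegral.integral_of_le hst,
    add_le_iff_nonpos_right]
  refine integral_nonpos_of_ae ((ae_restrict_iff' measurableSet_Ioc).2 ?_)
  filter_upwards [hw] with r hr hrst
  exact hr ⟨hs.1.trans hrst.1, hrst.2.trans_lt ht.2⟩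

lemma LocAbsContWithDeriv.integrableOn_Ioc {v w : ℝ → ℝ} {a b c : ℝ}
    (hv : LocAbsContWithDeriv v w a b) (hw : ∀ᵐ t, t ∈ Ioo a b → w t ≤ 0)
    (hbdd : BddBelow (v '' Ioo a b)) (hc : c ∈ Ioo a b) : IntegrableOn w (Ioc c b) := by
  obtain ⟨L, hL⟩ := hbdd
  set d : ℕ → ℝ := fun n => b - (b - c) * (1 / (n + 1))
  have hd : ∀ n, d n ∈ Ico c b := fun n => by
    have h1 : (0 : ℝ) < 1 / (n + 1) := by positivity
    have h2 : 1 / ((n : ℝ) + 1) ≤ 1 := by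
      rw [div_le_one (by positivity)]; linarith [n.cast_nonneg (α := ℝ)]
    constructor <;> nlinarith [hc.2]
  have hd_lim : Tendsto d atTop (𝓝 b) := by
    simpa [d] using (tendsto_one_div_add_atTop_nhds_zero_nat.const_mul (b - c)).const_sub b
  refine integrableOn_Ioc_of_intervalIntegral_norm_bounded_right (I := v c - L)
    (fun n => ((hv c (d n) hc.1 (hd n).1 (hd n).2).1).mono_set Ioc_subset_Icc_self) hd_lim
    (Eventually.of_forall fun n => ?_)
  obtain ⟨-, hftc⟩ := hv c (d n) hc.1 (hd n).1 (hd n).2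
  have hnorm : ∫ t in Ioc c (d n), ‖w t‖ = -∫ t in c..d n, w t := by
    rw [intervalIntegral.integral_of_le (hd n).1, ← integral_neg]
    refine setIntegral_congr_ae measurableSet_Ioc ?_
    filter_upwards [hw] with t ht htcd
    exact Real.norm_of_nonpos (ht ⟨hc.1.trans htcd.1, htcd.2.trans_lt (hd n).2⟩)
  have hLd : L ≤ v (d n) := hL (mem_image_of_mem v ⟨hc.1.trans_le (hd n).1, (hd n).2⟩)
  linarith [hftc (d n) (right_mem_Icc.2 (hd n).1)]

lemma curvatureFlux_sub_le_integral {v w φ μ : ℝ → ℝ} {x y : ℝ} (hxy : x ≤ y)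
    (hw : IntegrableOn w (Icc x y)) (hv : ∀ t ∈ Icc x y, v t = v x + ∫ s in x..t, w s)
    (heq : ∀ᵐ t, t ∈ Icc x y → -w t = φ t * (1 + v t ^ 2) ^ ((3 : ℝ) / 2))
    (hφμ : ∀ᵐ t, t ∈ Icc x y → φ t ≤ μ t) (hμ : IntervalIntegrable μ volume x y) :
    curvatureFlux (v x) - curvatureFlux (v y) ≤ ∫ t in x..y, μ t := by
  have hw' : IntervalIntegrable w volume x y :=
    (intervalIntegrable_iff_integrableOn_Icc_of_le hxy).2 hw
  have hv_cont : ContinuousOn v (uIcc x y) := by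
    refine (continuousOn_const.add (intervalIntegral.continuousOn_primitive_interval ?_)).congr
      fun t ht => hv t (uIcc_of_le hxy ▸ ht)
    rwa [uIcc_of_le hxy]
  have hint : IntervalIntegrable (fun t => ((1 + v t ^ 2) ^ ((3 : ℝ) / 2))⁻¹ * w t) volume x y :=
    hw'.continuousOn_mul <| ContinuousOn.inv₀
      ((hv_cont.pow 2).const_add 1 |>.rpow_const fun _ _ => Or.inr (by norm_num))
      fun t _ => by positivity
  rw [← neg_sub, ← integral_deriv_comp_mul_eq_sub_of_eq_add_integral lipschitzWith_curvatureFlux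
    hasDerivAt_curvatureFlux hxy hw' hv, ← intervalIntegral.integral_neg]
  refine intervalIntegral.integral_mono_ae_restrict hxy hint.neg hμ ?_
  filter_upwards [ae_restrict_of_ae heq, ae_restrict_of_ae hφμ, ae_restrict_mem measurableSet_Icc]
    with t heqt hφμt ht
  have hpos : 0 < (1 + v t ^ 2) ^ ((3 : ℝ) / 2) := by positivity
  calc -(((1 + v t ^ 2) ^ ((3 : ℝ) / 2))⁻¹ * w t) = φ t := by
        rw [← mul_neg, heqt ht]; field_simp
    _ ≤ μ t := hφμt ht

lemma LocAbsContWithDeriv.one_add_curvatureFlux_le_integral {v w φ μ : ℝ → ℝ} {a b δ : ℝ}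
    (hv : LocAbsContWithDeriv v w a b) (haδ : a ≤ b - δ)
    (heq : ∀ᵐ t, t ∈ Ioo a b → -w t = φ t * (1 + v t ^ 2) ^ ((3 : ℝ) / 2))
    (hμ : IntegrableOn μ (Ioo (b - δ) b)) (hφμ : ∀ᵐ t, t ∈ Ioo (b - δ) b → φ t ≤ μ t)
    (hM : ∀ x ∈ Ico (b - δ) b, 0 < ∫ t in x..b, μ t) (hlim : Tendsto v (𝓝[<] b) atBot)
    {x : ℝ} (hx : x ∈ Ioo (b - δ) b) : 1 + curvatureFlux (v x) ≤ ∫ t in x..b, μ t := by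
  have hμ_int : ∀ y z, b - δ < y → y ≤ z → z ≤ b → IntervalIntegrable μ volume y z :=
    fun y z hy hyz hz => (intervalIntegrable_iff_integrableOn_Ioo_of_le hyz).2
      (hμ.mono_set (Ioo_subset_Ioo hy.le hz))
  have hflux : ∀ y ∈ Ioo x b, curvatureFlux (v x) - curvatureFlux (v y) ≤ ∫ t in x..b, μ t := by
    intro y hy
    obtain ⟨hw, hftc⟩ := hv x y (haδ.trans_lt hx.1) hy.1.le hy.2
    have hsub : Icc x y ⊆ Ioo (b - δ) b := Icc_subset_Ioo hx.1 hy.2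
    have hxy := curvatureFlux_sub_le_integral hy.1.le hw hftc
      (heq.mono fun t ht htxy => ht ⟨haδ.trans_lt (hsub htxy).1, (hsub htxy).2⟩)
      (hφμ.mono fun t ht htxy => ht (hsub htxy)) (hμ_int x y hx.1 hy.1.le hy.2.le)
    rw [← intervalIntegral.integral_add_adjacent_intervals (hμ_int x y hx.1 hy.1.le hy.2.le)
      (hμ_int y b (hx.1.trans hy.1) hy.2.le le_rfl)]
    linarith [hM y ⟨(hx.1.trans hy.1).le, hy.2⟩]
  have hlim' := (tendsto_curvatureFlux_atBot.comp hlim).const_sub (curvatureFlux (v x))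
  rw [sub_neg_eq_add, add_comm] at hlim'
  exact le_of_tendsto hlim' (by filter_upwards [Ioo_mem_nhdsLT hx.2] with y hy using hflux y hy)

lemma integrableOn_one_div_sqrt_of_one_add_curvatureFlux_le {v M : ℝ → ℝ} {s : Set ℝ}
    (hs : MeasurableSet s) (hs_fin : volume s < ⊤) (hv : IntegrableOn v s)
    (hM : ContinuousOn M s) (hvM : ∀ x ∈ s, 1 + curvatureFlux (v x) ≤ M x) :
    IntegrableOn (fun x => 1 / √(M x)) s := by
  have hbound : ∀ x ∈ s, 1 / √(M x) ≤ 2 * (1 + |v x|) := by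
    intro x hx
    have hsqrt : (2 * (1 + |v x|))⁻¹ ≤ √(M x) :=
      (Real.le_sqrt' (by positivity)).2 ((inv_two_mul_one_add_abs_sq_le (v x)).trans (hvM x hx))
    rw [one_div]
    exact inv_le_of_inv_le₀ (by positivity) hsqrt
  refine Integrable.mono'
    ((integrableOn_const (C := (1 : ℝ)) hs_fin.ne).add hv.abs |>.const_mul 2) ?_ ?_
  · exact ((Real.continuous_sqrt.comp_continuousOn hM).aestronglyMeasurable hs).aemeasurable
      |>.const_div 1 |>.aestronglyMeasurable
  · filter_upwards [ae_restrict_mem hs] with x hx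
    rw [Real.norm_of_nonneg (by positivity)]
    exact hbound x hx

theorem boundary_regularity_right_nonneg_curvature_general
    (a b : ℝ) (hab : a < b) (f : ℝ → ℝ → ℝ) (u u' u'' : ℝ → ℝ)
    -- u ∈ W^{1,1}(a,b)
    (hu'_int : IntegrableOn u' (Ioo a b))
    -- u is C¹ on (a,b) with u' locally absolutely continuous, a.e. derivative u''
    (hu'_locAC : ∀ c d : ℝ, a < c → c ≤ d → d < b →
      IntegrableOn u'' (Icc c d) ∧ ∀ x ∈ Icc c d, u' x = u' c + ∫ t in c..x, u'' t)
    -- the prescribed curvature equation a.e. in (a,b)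
    (heq : ∀ᵐ x ∂volume, x ∈ Ioo a b →
      -u'' x = f x (u x) * (1 + u' x ^ 2) ^ ((3:ℝ)/2))
    -- nonnegative curvature
    (hsign : ∀ᵐ x ∂volume, x ∈ Ioo a b → 0 ≤ f x (u x))
    -- integral decay condition at the right endpoint
    (hdecay : ∃ δ > (0:ℝ), a ≤ b - δ ∧ ∃ μ : ℝ → ℝ,
      IntegrableOn μ (Ioo (b - δ) b) ∧
      (∀ᵐ x ∂volume, x ∈ Ioo (b - δ) b → f x (u x) ≤ μ x) ∧
      (∀ x ∈ Ico (b - δ) b, 0 < ∫ t in x..b, μ t) ∧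
      ¬ IntegrableOn (fun x => 1 / Real.sqrt (∫ t in x..b, μ t)) (Ioo (b - δ) b)) :
    (∃ L : ℝ, Tendsto u' (𝓝[<] b) (𝓝 L)) ∧
    ∀ c ∈ Ioo a b, IntegrableOn u'' (Ioo c b) := by
  obtain ⟨δ, hδ, haδ, μ, hμ, hfμ, hM_pos, hM_not_int⟩ := hdecay
  have hloc : LocAbsContWithDeriv u' u'' a b := hu'_locAC
  have hu''_nonpos : ∀ᵐ x, x ∈ Ioo a b → u'' x ≤ 0 := by
    filter_upwards [heq, hsign] with x hx hfx hmem
    nlinarith [hx hmem, hfx hmem,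
      Real.rpow_nonneg (by positivity : (0 : ℝ) ≤ 1 + u' x ^ 2) ((3 : ℝ) / 2)]
  have hanti : AntitoneOn u' (Ioo a b) := hloc.antitoneOn hu''_nonpos
  have hbdd : BddBelow (u' '' Ioo a b) := by
    by_contra hunbdd
    have hbδ : b - δ ≤ b := by linarith
    have hM_cont : ContinuousOn (fun x => ∫ t in x..b, μ t) (Icc (b - δ) b) := by
      have hμ' : IntegrableOn μ (uIcc (b - δ) b) := by
        rwa [uIcc_of_le hbδ, integrableOn_Icc_iff_integrableOn_Ioo]
      simpa [uIcc_of_le hbδ] using intervalIntegral.continuousOn_primitive_interval_left hμ'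
    exact hM_not_int <| integrableOn_one_div_sqrt_of_one_add_curvatureFlux_le measurableSet_Ioo
      measure_Ioo_lt_top (hu'_int.mono_set (Ioo_subset_Ioo_left haδ))
      (hM_cont.mono Ioo_subset_Icc_self) fun x hx =>
        hloc.one_add_curvatureFlux_le_integral haδ heq hμ hfμ hM_pos
          (hanti.tendsto_atBot_of_not_bddBelow hunbdd) hx
  exact ⟨⟨_, hanti.tendsto_nhdsWithin_Ioo_left (nonempty_Ioo.2 hab) hbdd⟩,
    fun c hc => (hloc.integrableOn_Ioc hu''_nonpos hbdd hc).mono_set Ioo_subset_Ioc_self⟩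

/-- **Boundary regularity at the right endpoint under an integral decay condition
(Theorem 3.2(jj), strong form).** If `u ∈ W^{1,1}(a,b)` is C¹ on `(a,b)` with `u'` locally
absolutely continuous, solves `-(u'/√(1+u'²))' = f(x,u) ≥ 0` a.e. (equivalently
`-u'' = f(x,u)(1+u'²)^{3/2}` a.e.), and there are `δ > 0` and `μ ∈ L¹(b-δ,b)` with
`f(x,u(x)) ≤ μ(x)` a.e. on `(b-δ,b)`, `M(x) = ∫_x^b μ > 0` on `[b-δ,b)`, and
`∫_{b-δ}^b dx/√(M(x)) = +∞`, then `u'(b⁻)` is finite and `u''` is integrable on `(c,b)`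
for every `c ∈ (a,b)`. -/
theorem boundary_regularity_right_nonneg_curvature
    (a b : ℝ) (hab : a < b) (f : ℝ → ℝ → ℝ) (u u' u'' : ℝ → ℝ)
    -- u ∈ W^{1,1}(a,b)
    (hu_cont : ContinuousOn u (Icc a b))
    (hu'_int : IntegrableOn u' (Ioo a b))
    (hu_ftc : ∀ x ∈ Icc a b, u x = u a + ∫ t in a..x, u' t)
    -- u is C¹ on (a,b) with u' locally absolutely continuous, a.e. derivative u''
    (hu_deriv : ∀ x ∈ Ioo a b, HasDerivAt u (u' x) x)
    (hu'_cont : ContinuousOn u' (Ioo a b))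
    (hu'_locAC : ∀ c d : ℝ, a < c → c ≤ d → d < b →
      IntegrableOn u'' (Icc c d) ∧ ∀ x ∈ Icc c d, u' x = u' c + ∫ t in c..x, u'' t)
    -- the prescribed curvature equation a.e. in (a,b)
    (heq : ∀ᵐ x ∂volume, x ∈ Ioo a b →
      -u'' x = f x (u x) * (1 + u' x ^ 2) ^ ((3:ℝ)/2))
    -- nonnegative curvature
    (hsign : ∀ᵐ x ∂volume, x ∈ Ioo a b → 0 ≤ f x (u x))
    -- integral decay condition at the right endpoint
    (hdecay : ∃ δ > (0:ℝ), a ≤ b - δ ∧ ∃ μ : ℝ → ℝ,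
      IntegrableOn μ (Ioo (b - δ) b) ∧
      (∀ᵐ x ∂volume, x ∈ Ioo (b - δ) b → f x (u x) ≤ μ x) ∧
      (∀ x ∈ Ico (b - δ) b, 0 < ∫ t in x..b, μ t) ∧
      ¬ IntegrableOn (fun x => 1 / Real.sqrt (∫ t in x..b, μ t)) (Ioo (b - δ) b)) :
    (∃ L : ℝ, Tendsto u' (𝓝[<] b) (𝓝 L)) ∧
    ∀ c ∈ Ioo a b, IntegrableOn u'' (Ioo c b) :=
  boundary_regularity_right_nonneg_curvature_general a b hab f u u' u'' hu'_int hu'_locAC heq hsign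
    hdecay
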